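/- arXiv:1704.07735 — 3 statements merged into one kernel-verified Lean document; each statement's English description precedes it below -/
import Mathlib

section
/- Let G be a real k×n matrix whose Gram matrix G^⊤G has ones on the diagonal and entries ±1/α off the diagonal, where α is a positive integer. Then for every a ∈ ℤⁿ with Ga ≠ 0, one has ‖Ga‖² ≥ 1/α. Hence the minimal norm of the lattice Λ = {Ga : a ∈ ℤⁿ} is at least 1/√α. -/
/-!
Multiplying the Gram matrix `GᵀG` by `α` gives an integer matrix `C`, so for an integer vector
`a` the number `α ‖Ga‖² = aᵀ C a` is an integer. When `Ga ≠ 0` it is positive, hence at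
least `1`.
-/

open Matrix

section

variable {n : Type*}

lemma Matrix.mulVec_dotProduct_mulVec_self {m R : Type*} [Fintype m] [Fintype n]
    [CommSemiring R] (G : Matrix m n R) (x : n → R) :
    G *ᵥ x ⬝ᵥ G *ᵥ x = x ⬝ᵥ (Gᵀ * G) *ᵥ x := by
  rw [← mulVec_mulVec, dotProduct_mulVec, mulVec_transpose, dotProduct_comm]

lemma Matrix.intCast_dotProduct_mulVec {R : Type*} [Fintype n] [CommRing R]
    (C : Matrix n n ℤ) (a : n → ℤ) :
    ((a ⬝ᵥ C *ᵥ a : ℤ) : R) =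
      (fun i => (a i : R)) ⬝ᵥ C.map (Int.cast : ℤ → R) *ᵥ (fun i => (a i : R)) := by
  simp only [dotProduct, mulVec, map_apply, Int.cast_sum, Int.cast_mul]

lemma exists_intMatrix_eq_smul_of_entries {M : Matrix n n ℝ} {α : ℕ} (hα : α ≠ 0)
    (hdiag : ∀ i, M i i = 1)
    (hoff : ∀ i j, i ≠ j → M i j = 1 / (α : ℝ) ∨ M i j = -(1 / (α : ℝ))) :
    ∃ C : Matrix n n ℤ, C.map (Int.cast : ℤ → ℝ) = (α : ℝ) • M := by
  have hentry : ∀ i j, ∃ c : ℤ, (c : ℝ) = α * M i j := by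
    intro i j
    have hαR : (α : ℝ) ≠ 0 := Nat.cast_ne_zero.mpr hα
    by_cases hij : i = j
    · exact ⟨α, by simp [hij, hdiag]⟩
    · rcases hoff i j hij with h | h
      · exact ⟨1, by simp [h, hαR]⟩
      · exact ⟨-1, by simp [h, hαR]⟩
  choose C hC using hentry
  exact ⟨Matrix.of C, by ext i j; simp [hC]⟩

lemma one_div_le_dotProduct_mulVec_of_intMatrix_eq_smul [Fintype n] {M : Matrix n n ℝ} {α : ℝ}
    (hα : 0 < α) {C : Matrix n n ℤ} (hC : C.map (Int.cast : ℤ → ℝ) = α • M)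
    (a : n → ℤ)
    (hpos : 0 < (fun i => (a i : ℝ)) ⬝ᵥ M *ᵥ (fun i => (a i : ℝ))) :
    1 / α ≤ (fun i => (a i : ℝ)) ⬝ᵥ M *ᵥ (fun i => (a i : ℝ)) := by
  set x : n → ℝ := fun i => (a i : ℝ)
  have hint : ((a ⬝ᵥ C *ᵥ a : ℤ) : ℝ) = α * (x ⬝ᵥ M *ᵥ x) := by
    rw [intCast_dotProduct_mulVec, hC, smul_mulVec, dotProduct_smul, smul_eq_mul]
  have hint_pos : 0 < a ⬝ᵥ C *ᵥ a := Int.cast_pos.mp (hint ▸ mul_pos hα hpos)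
  rw [div_le_iff₀ hα, mul_comm, ← hint]
  exact_mod_cast hint_pos

end

/-- If the Gram matrix of `G` has ones on the diagonal and `±1/α` off the diagonal with
`α` a positive integer, then `‖Ga‖² ≥ 1/α` for every integer vector `a` with `Ga ≠ 0`,
hence the minimal norm of the lattice `{Ga : a ∈ ℤⁿ}` is at least `1/√α`. -/
theorem stmt_3 (k n : ℕ) (G : Matrix (Fin k) (Fin n) ℝ) (α : ℕ) (hα : 0 < α)
    (hdiag : ∀ i, (Gᵀ * G) i i = 1)
    (hoff : ∀ i j, i ≠ j → (Gᵀ * G) i j = 1 / (α : ℝ) ∨ (Gᵀ * G) i j = -(1 / (α : ℝ))) :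
    ∀ a : Fin n → ℤ, G.mulVec (fun i => (a i : ℝ)) ≠ 0 →
      1 / (α : ℝ) ≤ (G.mulVec (fun i => (a i : ℝ))) ⬝ᵥ (G.mulVec (fun i => (a i : ℝ))) ∧
      1 / Real.sqrt (α : ℝ) ≤
        Real.sqrt ((G.mulVec (fun i => (a i : ℝ))) ⬝ᵥ (G.mulVec (fun i => (a i : ℝ)))) := by
  intro a ha
  obtain ⟨C, hC⟩ := exists_intMatrix_eq_smul_of_entries hα.ne' hdiag hoff
  have hpos : 0 < G *ᵥ (fun i => (a i : ℝ)) ⬝ᵥ G *ᵥ (fun i => (a i : ℝ)) := by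
    simpa only [star_trivial] using dotProduct_self_star_pos_iff.mpr ha
  rw [mulVec_dotProduct_mulVec_self] at hpos ⊢
  have hbound := one_div_le_dotProduct_mulVec_of_intMatrix_eq_smul (Nat.cast_pos.mpr hα) hC a hpos
  refine ⟨hbound, ?_⟩
  simpa only [one_div, Real.sqrt_inv] using Real.sqrt_le_sqrt hbound
end

section
/- Gerzon's bound: if f₁,…,fₙ are unit vectors in ℝᵏ with |⟨fᵢ,fⱼ⟩| = c for all i ≠ j for some constant 0 < c < 1, then n ≤ k(k+1)/2. -/
/-!
The outer products `fᵢ fᵢᵀ` are symmetric, so they live in the space of functions on unordered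
pairs `Sym2 (Fin k)`, of dimension `k(k+1)/2`. They are linearly independent: pairing a vanishing
combination `∑ gᵢ fᵢ fᵢᵀ` with `fⱼ fⱼᵀ` gives `∑ᵢ gᵢ ⟨fᵢ, fⱼ⟩² = 0`, i.e. `g` lies in the kernel of
the Gram matrix `(1 - c²) I + c² J`, which is positive definite.
-/

open Matrix

section Outer

variable {ι R : Type*} [CommSemiring R]

def sym2Outer (x : ι → R) : Sym2 ι → R :=
  Sym2.lift ⟨fun a b => x a * x b, fun _ _ => mul_comm _ _⟩

@[simp]
theorem sym2Outer_mk (x : ι → R) (a b : ι) : sym2Outer x s(a, b) = x a * x b := rfl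

theorem sum_mul_dotProduct_sq_eq_zero [Fintype ι] {m : Type*} [Fintype m] {f : m → ι → R}
    {g : m → R} (hg : ∑ i, g i • sym2Outer (f i) = 0) (y : ι → R) :
    ∑ i, g i * (f i ⬝ᵥ y) ^ 2 = 0 := by
  have hentry (a b : ι) : ∑ i, g i * (f i a * f i b) = 0 := by
    simpa [Finset.sum_apply] using congrFun hg s(a, b)
  calc ∑ i, g i * (f i ⬝ᵥ y) ^ 2
      = ∑ a, ∑ b, (∑ i, g i * (f i a * f i b)) * (y a * y b) := by
        simp only [dotProduct, sq, Finset.mul_sum, Finset.sum_mul]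
        rw [Finset.sum_comm]
        refine Finset.sum_congr rfl fun a _ => ?_
        rw [Finset.sum_comm]
        refine Finset.sum_congr rfl fun b _ => Finset.sum_congr rfl fun i _ => by ring
    _ = 0 := by simp [hentry]

end Outer

section Gram

variable {𝕜 m : Type*} [Field 𝕜] [LinearOrder 𝕜] [IsStrictOrderedRing 𝕜] [Fintype m]

theorem eq_zero_of_forall_one_sub_mul_add_mul_sum_eq_zero {g : m → 𝕜} {t : 𝕜} (ht0 : 0 ≤ t)
    (ht1 : t < 1) (h : ∀ j, (1 - t) * g j + t * ∑ i, g i = 0) : g = 0 := by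
  have hsum : (1 - t + Fintype.card m * t) * ∑ i, g i = 0 := by
    have := Finset.sum_eq_zero fun j (_ : j ∈ Finset.univ) => h j
    rw [Finset.sum_add_distrib, ← Finset.mul_sum, Finset.sum_const, Finset.card_univ, nsmul_eq_mul]
      at this
    linear_combination this
  have hpos : 0 < 1 - t + Fintype.card m * t := by positivity
  have hS : ∑ i, g i = 0 := (mul_eq_zero.1 hsum).resolve_left hpos.ne'
  funext j
  simpa [hS, (sub_pos.2 ht1).ne'] using h j

theorem linearIndependent_sym2Outer_of_equiangular {ι : Type*} [Fintype ι] {f : m → ι → 𝕜}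
    {t : 𝕜} (ht0 : 0 ≤ t) (ht1 : t < 1) (hunit : ∀ i, f i ⬝ᵥ f i = 1)
    (hang : ∀ i j, i ≠ j → (f i ⬝ᵥ f j) ^ 2 = t) :
    LinearIndependent 𝕜 fun i => sym2Outer (f i) := by
  classical
  rw [Fintype.linearIndependent_iff]
  intro g hg
  refine congrFun (eq_zero_of_forall_one_sub_mul_add_mul_sum_eq_zero ht0 ht1 fun j => ?_)
  have hgram (i : m) : (f i ⬝ᵥ f j) ^ 2 = t + if i = j then 1 - t else 0 := by
    split_ifs with hij
    · rw [hij, hunit, one_pow, add_sub_cancel]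
    · rw [hang i j hij, add_zero]
  have := sum_mul_dotProduct_sq_eq_zero hg (f j)
  simp only [hgram, mul_add, mul_ite, mul_zero, Finset.sum_add_distrib, Finset.sum_ite_eq',
    Finset.mem_univ, if_true, ← Finset.sum_mul] at this
  linear_combination this

end Gram

/-- Gerzon's bound: `n` equiangular unit vectors in `ℝᵏ` satisfy `n ≤ k(k+1)/2`. -/
theorem stmt_6 (k n : ℕ) (f : Fin n → Fin k → ℝ) (c : ℝ) (hc0 : 0 < c) (hc1 : c < 1)
    (hunit : ∀ i, f i ⬝ᵥ f i = 1)
    (hang : ∀ i j, i ≠ j → |f i ⬝ᵥ f j| = c) :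
    n ≤ k * (k + 1) / 2 := by
  have hli := linearIndependent_sym2Outer_of_equiangular (sq_nonneg c)
    (pow_lt_one₀ hc0.le hc1 two_ne_zero) hunit fun i j hij => by rw [← sq_abs, hang i j hij]
  have hcard := hli.fintype_card_le_finrank
  rw [Module.finrank_fintype_fun_eq_card, Sym2.card, Fintype.card_fin, Fintype.card_fin,
    Nat.choose_two_right, Nat.mul_comm] at hcard
  exact hcard
end

section
/- Let F = {f₁,…,fₙ} be a tight frame for ℝ² with f₁ = (1,0)^⊤, such that the integer span Λ(F) = span_ℤ{f₁,…,fₙ} is a lattice (i.e., a discrete subgroup of ℝ²). Then all inner products ⟨fᵢ,fⱼ⟩ are rational. -/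
/-!
Discreteness makes the integer span of the frame a full lattice, so in a `ℤ`-basis `b` of it
every `fᵢ` has integer coordinates; collect them as the rows of a matrix `R`. Read in the basis
`b`, the reconstruction formula `x = γ ∑ ⟨fᵢ, x⟩ fᵢ` of a tight frame says `γ Rᵀ R G_b = 1` for the
Gram matrix `G_b` of `b`. Hence `γ G_b = (Rᵀ R)⁻¹` is rational, and so is
`γ G_f = R (γ G_b) Rᵀ`. Since `⟨f₁, f₁⟩ = 1`, the factor `γ` is itself rational.
-/

open Matrix Module Submodule Set
open scoped RealInnerProductSpace

theorem discreteTopology_span_range_of_le_norm {ι E : Type*} [Fintype ι] [NormedAddCommGroup E]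
    {f : ι → E} {ε : ℝ} (hε : 0 < ε) (h : ∀ a : ι → ℤ, ∑ i, a i • f i = 0 ∨ ε ≤ ‖∑ i, a i • f i‖) :
    DiscreteTopology (span ℤ (range f)) := by
  refine DiscreteTopology.of_forall_le_norm hε fun x hx => ?_
  obtain ⟨a, ha⟩ := (mem_span_range_iff_exists_fun ℤ).1 x.2
  rcases h a with h0 | hle
  · exact absurd (Subtype.ext (ha ▸ h0)) hx
  · simpa [ha] using hle

theorem exists_basis_repr_eq_intCast {ι E : Type*} [NormedAddCommGroup E] [NormedSpace ℝ E]
    [FiniteDimensional ℝ E] {f : ι → E} [DiscreteTopology (span ℤ (range f))]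
    (hs : span ℝ (range f) = ⊤) :
    ∃ b : Basis (Fin (finrank ℝ E)) ℝ E, ∀ i k, ∃ z : ℤ, b.repr (f i) k = z := by
  set L := span ℤ (range f)
  have : IsZLattice ℝ L := ⟨by rw [span_span_of_tower, hs]⟩
  have := ZLattice.module_free ℝ L
  have := ZLattice.module_finite ℝ L
  let bL := (Free.chooseBasis ℤ L).reindex (Fintype.equivFinOfCardEq
    (by rw [← finrank_eq_card_chooseBasisIndex, ZLattice.rank ℝ L]))
  exact ⟨bL.ofZLatticeBasis ℝ L, fun i k => ⟨bL.repr ⟨f i, subset_span (mem_range_self i)⟩ k,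
    bL.ofZLatticeBasis_repr_apply ℝ L ⟨f i, subset_span (mem_range_self i)⟩ k⟩⟩

/-- The paper's condition `G Gᵀ = γ⁻¹ I`, tested on the quadratic form. -/
def IsTightFrame {ι E : Type*} [Fintype ι] [NormedAddCommGroup E] [InnerProductSpace ℝ E]
    (γ : ℝ) (f : ι → E) : Prop :=
  ∀ x, ⟪x, x⟫ = γ * ∑ i, ⟪f i, x⟫ ^ 2

section Gram

variable {ι κ E : Type*} [Fintype κ] [NormedAddCommGroup E] [InnerProductSpace ℝ E]
  (b : Basis κ ℝ E) (v : ι → E)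

theorem Module.Basis.inner_left_eq_sum_toMatrix (i : ι) (x : E) :
    ⟪v i, x⟫ = ∑ k, b.toMatrix v k i * ⟪b k, x⟫ := by
  rw [← b.sum_toMatrix_smul_self v i]
  simp only [sum_inner, real_inner_smul_left]

theorem Matrix.transpose_toMatrix_mul_gram_apply (i : ι) (k : κ) :
    ((b.toMatrix v)ᵀ * gram ℝ b) i k = ⟪v i, b k⟫ := by
  simp [mul_apply, b.inner_left_eq_sum_toMatrix v i]

theorem Matrix.gram_eq_transpose_toMatrix_mul_gram_mul :
    gram ℝ v = (b.toMatrix v)ᵀ * gram ℝ b * b.toMatrix v := by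
  ext i j
  rw [mul_apply]
  simp only [transpose_toMatrix_mul_gram_apply, gram_apply]
  rw [← real_inner_comm, b.inner_left_eq_sum_toMatrix v j]
  simp only [real_inner_comm, mul_comm]

end Gram

namespace IsTightFrame

variable {ι κ E : Type*} [Fintype ι] [Fintype κ] [NormedAddCommGroup E] [InnerProductSpace ℝ E]
  {γ : ℝ} {f : ι → E}

theorem inner_eq (hf : IsTightFrame γ f) (x y : E) :
    ⟪x, y⟫ = γ * ∑ i, ⟪f i, x⟫ * ⟪f i, y⟫ := by
  have h := hf (x + y)
  simp only [inner_add_left, inner_add_right, add_sq, Finset.sum_add_distrib, mul_assoc,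
    ← Finset.mul_sum, real_inner_comm x y] at h
  linear_combination (h - hf x - hf y) / 2

theorem eq_smul_sum (hf : IsTightFrame γ f) (x : E) : x = γ • ∑ i, ⟪f i, x⟫ • f i :=
  ext_inner_right ℝ fun y => by
    simp [hf.inner_eq x y, real_inner_smul_left, sum_inner]

theorem span_range_eq_top (hf : IsTightFrame γ f) : span ℝ (range f) = ⊤ :=
  eq_top_iff.2 fun x _ => hf.eq_smul_sum x ▸
    smul_mem _ _ (sum_mem fun i _ => smul_mem _ _ (subset_span (mem_range_self i)))

theorem smul_toMatrix_mul_transpose_mul_gram [DecidableEq κ] (hf : IsTightFrame γ f)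
    (b : Basis κ ℝ E) : γ • (b.toMatrix f * (b.toMatrix f)ᵀ * gram ℝ b) = 1 := by
  ext k l
  have h := congrArg (fun x => b.repr x k) (hf.eq_smul_sum (b l))
  simp only [b.repr_self, Finsupp.single_apply, map_smul, map_sum] at h
  rw [one_apply, eq_comm, Matrix.smul_apply, Matrix.mul_assoc, mul_apply]
  simpa [transpose_toMatrix_mul_gram_apply, b.toMatrix_apply, mul_comm, eq_comm] using h

theorem exists_ratCast_eq_mul_inner (hf : IsTightFrame γ f) (b : Basis κ ℝ E)
    (hb : ∀ i k, ∃ q : ℚ, b.repr (f i) k = q) (i j : ι) : ∃ q : ℚ, γ * ⟪f i, f j⟫ = q := by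
  classical
  choose R hR using hb
  let ψ := Rat.castHom ℝ
  have hP : b.toMatrix f = (of R)ᵀ.map ψ := by
    ext k i
    simp [ψ, b.toMatrix_apply, hR]
  set M := (of R)ᵀ * of R
  have hM : M.map ψ * (γ • gram ℝ b) = 1 := by
    have h := hf.smul_toMatrix_mul_transpose_mul_gram b
    rwa [hP, ← transpose_map, transpose_transpose, ← Matrix.map_mul, ← Matrix.mul_smul] at h
  have hdet : IsUnit M.det := by
    refine isUnit_iff_ne_zero.2 fun h0 => det_ne_zero_of_right_inverse hM ?_
    rw [← RingHom.mapMatrix_apply, ← RingHom.map_det, h0, map_zero]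
  have hG : γ • gram ℝ b = M⁻¹.map ψ := by
    calc γ • gram ℝ b = (M⁻¹ * M).map ψ * (γ • gram ℝ b) := by
          rw [nonsing_inv_mul _ hdet, Matrix.map_one _ (map_zero ψ) (map_one ψ), Matrix.one_mul]
      _ = M⁻¹.map ψ := by rw [Matrix.map_mul, Matrix.mul_assoc, hM, Matrix.mul_one]
  have hK : γ • gram ℝ f = (of R * M⁻¹ * (of R)ᵀ).map ψ := by
    rw [gram_eq_transpose_toMatrix_mul_gram_mul b, ← smul_mul, ← Matrix.mul_smul, hG, hP,
      ← transpose_map, transpose_transpose, Matrix.map_mul, Matrix.map_mul]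
  exact ⟨(of R * M⁻¹ * (of R)ᵀ) i j, by simpa using congrFun₂ hK i j⟩

theorem exists_ratCast_eq_mul_inner_of_discreteTopology [FiniteDimensional ℝ E]
    [DiscreteTopology (span ℤ (range f))] (hf : IsTightFrame γ f) (i j : ι) :
    ∃ q : ℚ, γ * ⟪f i, f j⟫ = q := by
  obtain ⟨b, hb⟩ := exists_basis_repr_eq_intCast hf.span_range_eq_top
  refine hf.exists_ratCast_eq_mul_inner b (fun i k => ?_) i j
  obtain ⟨z, hz⟩ := hb i k
  exact ⟨z, by rw [hz, Rat.cast_intCast]⟩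

theorem exists_ratCast_eq_inner [FiniteDimensional ℝ E] [DiscreteTopology (span ℤ (range f))]
    (hf : IsTightFrame γ f) {i₀ : ι} (h₀ : ⟪f i₀, f i₀⟫ = 1) (i j : ι) :
    ∃ q : ℚ, ⟪f i, f j⟫ = q := by
  obtain ⟨q₀, hq₀⟩ := hf.exists_ratCast_eq_mul_inner_of_discreteTopology i₀ i₀
  obtain ⟨q, hq⟩ := hf.exists_ratCast_eq_mul_inner_of_discreteTopology i j
  rw [h₀, mul_one] at hq₀
  have hγ : γ ≠ 0 := by
    rintro rfl
    have h := hf (f i₀)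
    rw [h₀, zero_mul] at h
    exact one_ne_zero h
  exact ⟨q / q₀, by rw [Rat.cast_div, ← hq, ← hq₀]; field_simp⟩

end IsTightFrame

/-- If an `(n,2)` tight frame with `f₁ = (1,0)ᵀ` has integer span which is a lattice
(discrete), then all inner products `⟨fᵢ,fⱼ⟩` are rational. -/
theorem stmt_12 (n : ℕ) (hn : 2 < n) (f : Fin n → Fin 2 → ℝ)
    (hf1 : f ⟨0, by omega⟩ = ![1, 0])
    (htight : ∃ γ : ℝ, 0 < γ ∧ ∀ x : Fin 2 → ℝ, x ⬝ᵥ x = γ * ∑ i, (f i ⬝ᵥ x) ^ 2)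
    (hlattice : ∃ ε > 0, ∀ a : Fin n → ℤ,
      (∑ i, (a i : ℝ) • f i) = 0 ∨ ε ≤ (∑ i, (a i : ℝ) • f i) ⬝ᵥ (∑ i, (a i : ℝ) • f i)) :
    ∀ i j, ∃ q : ℚ, f i ⬝ᵥ f j = (q : ℝ) := by
  obtain ⟨γ, -, htight⟩ := htight
  obtain ⟨ε, hε, hsep⟩ := hlattice
  let g i : EuclideanSpace ℝ (Fin 2) := WithLp.toLp 2 (f i)
  have inner_toLp (x y : Fin 2 → ℝ) : ⟪WithLp.toLp 2 x, WithLp.toLp 2 y⟫ = x ⬝ᵥ y := by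
    simp [EuclideanSpace.inner_toLp_toLp, dotProduct_comm]
  have hg : IsTightFrame γ g := by
    rintro ⟨x⟩
    simpa only [g, inner_toLp] using htight x
  have : DiscreteTopology (span ℤ (range g)) := by
    refine discreteTopology_span_range_of_le_norm (Real.sqrt_pos.2 hε) fun a => ?_
    have hsum : ∑ i, a i • g i = WithLp.toLp 2 (∑ i, (a i : ℝ) • f i) := by
      simp [g, ← Int.cast_smul_eq_zsmul ℝ]
    rw [hsum]
    refine (hsep a).imp (fun h => by rw [h]; rfl) fun h => ?_
    rwa [Real.sqrt_le_left (norm_nonneg _), ← real_inner_self_eq_norm_sq, inner_toLp]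
  have hg₀ : ⟪g ⟨0, by omega⟩, g ⟨0, by omega⟩⟫ = 1 := by
    simp only [g, inner_toLp, hf1]
    simp
  intro i j
  simpa [g, inner_toLp] using hg.exists_ratCast_eq_inner hg₀ i j
end
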